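/- arXiv:2604.25900 — 2 statements merged into one kernel-verified Lean document; each statement's English description precedes it below -/
import Mathlib

section
/- Let A₁,…,A_m be self-adjoint operators on a complex inner product space with ‖Aⱼ‖ ≤ 1, let C > 0 and λ₁,…,λ_m ∈ ℝ with |λⱼ| ≤ C for all j, and suppose ψ ≠ 0 satisfies ⟪(∑ⱼ λⱼ Aⱼ)ψ, ψ⟫ = -mC‖ψ‖². Then for every j, |λⱼ| = C and (λⱼ/C) Aⱼ ψ = -ψ. -/
theorem stmt_3 {E : Type*} [NormedAddCommGroup E] [InnerProductSpace ℂ E]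
    [CompleteSpace E] {m : ℕ}
    (A : Fin m → E →L[ℂ] E)
    (hsa : ∀ j, ContinuousLinearMap.adjoint (A j) = A j)
    (hA : ∀ j, ‖A j‖ ≤ 1)
    {C : ℝ} (hC : 0 < C) (lam : Fin m → ℝ) (hlam : ∀ j, |lam j| ≤ C)
    (ψ : E) (hψ : ψ ≠ 0)
    (h : (inner ℂ ((∑ j, lam j • A j) ψ) ψ : ℂ) = -(((m : ℝ) * C * ‖ψ‖ ^ 2 : ℝ) : ℂ)) :
    ∀ j, |lam j| = C ∧ (lam j / C) • (A j) ψ = -ψ := by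
  have hψn : (0:ℝ) < ‖ψ‖ := norm_pos_iff.mpr hψ
  set x : Fin m → E := fun j => lam j • (A j) ψ with hx
  -- norm bound on each x j
  have hxnorm : ∀ j, ‖x j‖ ≤ C * ‖ψ‖ := by
    intro j
    have h1 : ‖(A j) ψ‖ ≤ ‖ψ‖ := by
      calc ‖(A j) ψ‖ ≤ ‖A j‖ * ‖ψ‖ := (A j).le_opNorm ψ
        _ ≤ 1 * ‖ψ‖ := by gcongr; exact hA j
        _ = ‖ψ‖ := one_mul _
    calc ‖x j‖ = |lam j| * ‖(A j) ψ‖ := by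
          rw [hx]; simp [norm_smul, Real.norm_eq_abs]
      _ ≤ C * ‖ψ‖ := by gcongr; exact hlam j
  -- inner product bound
  have hbound : ∀ j, ‖(inner ℂ (x j) ψ : ℂ)‖ ≤ C * ‖ψ‖ ^ 2 := by
    intro j
    calc ‖(inner ℂ (x j) ψ : ℂ)‖ ≤ ‖x j‖ * ‖ψ‖ := norm_inner_le_norm _ _
      _ ≤ (C * ‖ψ‖) * ‖ψ‖ := by gcongr; exact hxnorm j
      _ = C * ‖ψ‖ ^ 2 := by ring
  -- sum of real parts
  have hsum : ∑ j, ((inner ℂ (x j) ψ : ℂ)).re = -((m : ℝ) * C * ‖ψ‖ ^ 2) := by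
    have : (inner ℂ ((∑ j, lam j • A j) ψ) ψ : ℂ) = ∑ j, (inner ℂ (x j) ψ : ℂ) := by
      rw [ContinuousLinearMap.sum_apply, sum_inner]
      rfl
    rw [this] at h
    have := congrArg Complex.re h
    simpa [← Complex.ofReal_pow] using this
  -- each real part equals -(C * ‖ψ‖^2)
  have hre : ∀ j, ((inner ℂ (x j) ψ : ℂ)).re = -(C * ‖ψ‖ ^ 2) := by
    have hnn : ∀ j ∈ Finset.univ, (0:ℝ) ≤ ((inner ℂ (x j) ψ : ℂ)).re + C * ‖ψ‖ ^ 2 := by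
      intro j _
      have h1 : -(C * ‖ψ‖ ^ 2) ≤ ((inner ℂ (x j) ψ : ℂ)).re := by
        have := (abs_le.mp (abs_le.mpr ⟨neg_le_of_neg_le (le_trans
          (neg_le_abs _) (le_trans (Complex.abs_re_le_norm _) (hbound j))),
          le_trans (le_abs_self _) (le_trans (Complex.abs_re_le_norm _) (hbound j))⟩)).1
        linarith
      linarith
    have hzero : ∑ j, (((inner ℂ (x j) ψ : ℂ)).re + C * ‖ψ‖ ^ 2) = 0 := by
      rw [Finset.sum_add_distrib, hsum]
      simp
      ring
    intro j
    have := (Finset.sum_eq_zero_iff_of_nonneg hnn).mp hzero j (Finset.mem_univ j)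
    linarith
  intro j
  -- norm equality
  have hxn : ‖x j‖ = C * ‖ψ‖ := by
    have h1 : C * ‖ψ‖ ^ 2 ≤ ‖x j‖ * ‖ψ‖ := by
      have : |((inner ℂ (x j) ψ : ℂ)).re| ≤ ‖(inner ℂ (x j) ψ : ℂ)‖ := Complex.abs_re_le_norm _
      have h2 : ‖(inner ℂ (x j) ψ : ℂ)‖ ≤ ‖x j‖ * ‖ψ‖ := norm_inner_le_norm _ _
      rw [hre j, abs_neg, abs_of_nonneg (by positivity)] at this
      linarith
    have h2 : ‖x j‖ ≤ C * ‖ψ‖ := hxnorm j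
    nlinarith
  have hlamC : |lam j| = C := by
    have h1 : ‖x j‖ = |lam j| * ‖(A j) ψ‖ := by
      rw [hx]; simp [norm_smul, Real.norm_eq_abs]
    have h2 : ‖(A j) ψ‖ ≤ ‖ψ‖ := by
      calc ‖(A j) ψ‖ ≤ ‖A j‖ * ‖ψ‖ := (A j).le_opNorm ψ
        _ ≤ 1 * ‖ψ‖ := by gcongr; exact hA j
        _ = ‖ψ‖ := one_mul _
    have h3 : C * ‖ψ‖ ≤ |lam j| * ‖ψ‖ := by
      have := hxn
      rw [h1] at this
      nlinarith [abs_nonneg (lam j)]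
    have := le_of_mul_le_mul_right h3 hψn
    exact le_antisymm (hlam j) this
  refine ⟨hlamC, ?_⟩
  -- inner is real and equals -‖x j‖‖ψ‖
  have habs : ‖(inner ℂ (x j) ψ : ℂ)‖ ≤ C * ‖ψ‖ ^ 2 := by
    simpa using hbound j
  have h1abs : |((inner ℂ (x j) ψ : ℂ)).re| = C * ‖ψ‖ ^ 2 := by
    rw [hre j, abs_neg, abs_of_nonneg (by positivity)]
  have him : ((inner ℂ (x j) ψ : ℂ)).im = 0 := by
    rw [← Complex.abs_re_eq_norm]
    exact le_antisymm (Complex.abs_re_le_norm _) (habs.trans h1abs.ge)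
  have hinner : (inner ℂ (x j) ψ : ℂ) = -((C * ‖ψ‖ ^ 2 : ℝ) : ℂ) := by
    rw [Complex.ext_iff]
    exact ⟨by rw [hre j, Complex.neg_re, Complex.ofReal_re],
      by rw [him, Complex.neg_im, Complex.ofReal_im, neg_zero]⟩
  -- Cauchy–Schwarz equality case for (-(x j), ψ)
  have hcs : (inner ℂ (-(x j)) ψ : ℂ) = (‖-(x j)‖ : ℂ) * ‖ψ‖ := by
    rw [inner_neg_left, hinner, norm_neg, hxn]
    push_cast
    ring
  have h1 := inner_eq_norm_mul_iff.mp hcs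
  rw [norm_neg, hxn] at h1
  have hψC : ((‖ψ‖ : ℝ) : ℂ) ≠ 0 := by simp [hψn.ne']
  have hx' : -(x j) = ((C : ℝ) : ℂ) • ψ := by
    have h2 : ((‖ψ‖ : ℝ) : ℂ) • -(x j) = ((‖ψ‖ : ℝ) : ℂ) • (((C : ℝ) : ℂ) • ψ) := by
      refine h1.trans ?_
      rw [smul_smul]
      congr 1
      push_cast
      exact mul_comm _ _
    exact smul_right_injective E hψC h2
  -- conclude
  have hxj : x j = -(((C : ℝ) : ℂ) • ψ) := by rw [← hx']; exact (neg_neg _).symm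
  have : (lam j / C) • (A j) ψ = (C⁻¹ : ℝ) • x j := by
    rw [hx, smul_smul, div_eq_inv_mul]
  rw [this, hxj, smul_neg, Complex.coe_smul, smul_smul,
    inv_mul_cancel₀ hC.ne', one_smul]
end

section
/- Let g : V × V → ℝ be an inner product on a finite-dimensional real vector space and J an endomorphism with J² = -id and g(Jv, Jw) = g(v, w). Define ω(v,w) := g(Jv, w). Then ω is alternating and nondegenerate, and for every unit simple 2-vector v ∧ w (v, w orthonormal), |ω(v,w)| ≤ 1, with equality iff w = ±Jv (Wirtinger inequality in degree 2). -/
theorem stmt_17 {V : Type*} [NormedAddCommGroup V] [InnerProductSpace ℝ V]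
    [FiniteDimensional ℝ V]
    (J : V →ₗ[ℝ] V)
    (hJ2 : ∀ v, J (J v) = -v)
    (hJorth : ∀ v w, (inner ℝ (J v) (J w) : ℝ) = (inner ℝ v w : ℝ))
    (ω : V → V → ℝ)
    (hω : ∀ v w, ω v w = (inner ℝ (J v) w : ℝ)) :
    (∀ v, ω v v = 0) ∧
    (∀ v, (∀ w, ω v w = 0) → v = 0) ∧
    (∀ v w : V, ‖v‖ = 1 → ‖w‖ = 1 → (inner ℝ v w : ℝ) = 0 →
      (|ω v w| ≤ 1 ∧ (|ω v w| = 1 ↔ w = J v ∨ w = -(J v)))) := by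
  have hnorm : ∀ v : V, ‖J v‖ = ‖v‖ := by
    intro v
    have h := hJorth v v
    rw [real_inner_self_eq_norm_sq, real_inner_self_eq_norm_sq] at h
    nlinarith [norm_nonneg (J v), norm_nonneg v]
  refine ⟨?_, ?_, ?_⟩
  · intro v
    have h := hJorth (J v) v
    rw [hJ2 v, inner_neg_left, real_inner_comm v (J v)] at h
    have : (inner ℝ (J v) v : ℝ) = 0 := by rw [real_inner_comm]; linarith
    rw [hω]; exact this
  · intro v hv
    have hJv : J v = 0 := by
      have := hv (J v)
      rw [hω] at this
      exact inner_self_eq_zero.mp this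
    have := hJ2 v
    rw [hJv, map_zero] at this
    simpa using this.symm
  · intro v w hv hw _
    have hJvn : ‖J v‖ = 1 := by rw [hnorm, hv]
    constructor
    · calc |ω v w| = ‖(inner ℝ (J v) w : ℝ)‖ := by rw [hω]; rfl
        _ ≤ ‖J v‖ * ‖w‖ := norm_inner_le_norm _ _
        _ = 1 := by rw [hJvn, hw]; ring
    · have hJv0 : J v ≠ 0 := by rw [← norm_ne_zero_iff, hJvn]; norm_num
      have hw0 : w ≠ 0 := by rw [← norm_ne_zero_iff, hw]; norm_num
      constructor
      · intro h
        have h' : ‖(inner ℝ (J v) w : ℝ)‖ = ‖J v‖ * ‖w‖ := by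
          rw [hJvn, hw, mul_one]
          rw [hω] at h
          exact h
        obtain ⟨r, hr0, hrw⟩ := (norm_inner_eq_norm_iff hJv0 hw0).mp h'
        have hrn : |r| = 1 := by
          have := congrArg norm hrw
          rw [norm_smul, hJvn, hw, mul_one] at this
          exact this.symm
        rcases abs_eq (by norm_num : (0:ℝ) ≤ 1) |>.mp hrn with h1 | h1
        · left; rw [hrw, h1, one_smul]
        · right; rw [hrw, h1, neg_smul, one_smul]
      · rintro (rfl | rfl)
        · rw [hω, real_inner_self_eq_norm_sq, hJvn]; norm_num
        · rw [hω, inner_neg_right, real_inner_self_eq_norm_sq, hJvn]; norm_num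
end
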